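/- arXiv:2401.08549 — 4 statements merged into one kernel-verified Lean document; each statement's English description precedes it below -/
import Mathlib

section
/- Let V_1, V_2, V_3 be finite-dimensional real vector spaces, A : V_1 → V_2 and B : V_2 → V_3 linear maps with ker(B) = im(A), and let P : V_2 → V_2 be a linear involution (P² = I). Set M = B ∘ P ∘ A. Then for any φ ∈ V_1, M φ = 0 if and only if there exist φ_+, φ_- ∈ V_1 with φ = φ_+ + φ_-, P A φ_± = ± A φ_±, and moreover M φ_+ = M φ_- = 0. -/
/-- If `ker B = im A` and `P` is a linear involution on `V₂`, and
`M = B ∘ P ∘ A`, then `M φ = 0` iff `φ` splits as `φ₊ + φ₋` with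
`P (A φ±) = ± A φ±`, and moreover `M φ₊ = M φ₋ = 0`. -/
theorem stmt4 {V₁ V₂ V₃ : Type*}
    [AddCommGroup V₁] [Module ℝ V₁] [FiniteDimensional ℝ V₁]
    [AddCommGroup V₂] [Module ℝ V₂] [FiniteDimensional ℝ V₂]
    [AddCommGroup V₃] [Module ℝ V₃] [FiniteDimensional ℝ V₃]
    (A : V₁ →ₗ[ℝ] V₂) (B : V₂ →ₗ[ℝ] V₃) (P : V₂ →ₗ[ℝ] V₂)
    (hP : P ∘ₗ P = LinearMap.id)
    (hexact : LinearMap.ker B = LinearMap.range A)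
    (M : V₁ →ₗ[ℝ] V₃) (hM : M = B ∘ₗ P ∘ₗ A) :
    ∀ φ : V₁, M φ = 0 ↔
      ∃ φp φm : V₁, φ = φp + φm ∧
        P (A φp) = A φp ∧ P (A φm) = -(A φm) ∧
        M φp = 0 ∧ M φm = 0 := by
  intro φ
  have hPP : ∀ v, P (P v) = v := fun v => congrArg (· v) hP
  constructor
  · intro h0
    have hker : P (A φ) ∈ LinearMap.ker B := by
      rw [hM] at h0; simpa using h0
    rw [hexact] at hker
    obtain ⟨ψ, hψ⟩ := hker
    refine ⟨(1/2 : ℝ) • (φ + ψ), (1/2 : ℝ) • (φ - ψ), by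
      rw [← smul_add]; ring_nf; module, ?_, ?_, ?_, ?_⟩
    · simp only [map_smul, map_add]
      rw [hψ, hPP]
      module
    · simp only [map_smul, map_sub]
      rw [hψ, hPP]
      module
    · have hfix : P (A ((1/2 : ℝ) • (φ + ψ))) = A ((1/2 : ℝ) • (φ + ψ)) := by
        simp only [map_smul, map_add]; rw [hψ, hPP]; module
      rw [hM]
      simp only [LinearMap.comp_apply]
      rw [hfix]
      have : A ((1/2 : ℝ) • (φ + ψ)) ∈ LinearMap.ker B := by
        rw [hexact]; exact ⟨_, rfl⟩
      exact this
    · have hfix : P (A ((1/2 : ℝ) • (φ - ψ))) = -(A ((1/2 : ℝ) • (φ - ψ))) := by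
        simp only [map_smul, map_sub]; rw [hψ, hPP]; module
      rw [hM]
      simp only [LinearMap.comp_apply]
      rw [hfix, map_neg]
      have : A ((1/2 : ℝ) • (φ - ψ)) ∈ LinearMap.ker B := by
        rw [hexact]; exact ⟨_, rfl⟩
      rw [LinearMap.mem_ker] at this
      rw [this, neg_zero]
  · rintro ⟨φp, φm, rfl, _, _, hp, hm⟩
    rw [map_add, hp, hm, add_zero]
end

section
/- Let G be a connected planar directed graph with incidence matrix A, coherently oriented face matrix B, edge partition E = C ∪ I, and connection matrix M_{fv} = (1/2)Σ_{e∈C} B_{fe}A_{ev} - (1/2)Σ_{e∈I} B_{fe}A_{ev}. A vector φ ∈ R^V (modulo the all-ones vector) satisfies Mφ = 0 if and only if φ is a linear combination of indicator vectors of vertex sets whose induced edge-cuts consist entirely of edges in C or entirely of edges in I. -/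
/-!
Because `(P + 1) / 2` projects onto the edges of `C` and `B A = 0`, we have `M φ = B (1_C · A φ)`.
By exactness, `M φ = 0` iff `1_C · A φ = A ψ` for some `ψ`, i.e. iff `φ = ψ + χ` with `ψ`
constant across every edge of `I` and `χ` constant across every edge of `C`. A function constant
across the edges outside a class is a combination of the indicators of its level sets, whose cuts
lie in that class; conversely, the indicator of a set whose cut lies in a class is constant across
all other edges.
-/

open Matrix

section IncidenceMatrix

variable {E V : Type*} (src tgt : E → V)

def constantAcross (q : E → Prop) : Submodule ℝ (V → ℝ) where
  carrier := {g | ∀ e, q e → g (src e) = g (tgt e)}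
  add_mem' hf hg e he := by simp only [Pi.add_apply, hf e he, hg e he]
  zero_mem' _ _ := rfl
  smul_mem' c _ hg e he := by simp only [Pi.smul_apply, hg e he]

def cutIndicators [DecidableEq V] (p : E → Prop) : Set (V → ℝ) :=
  {x | ∃ S : Finset V, (∀ e : E, ¬(src e ∈ S ↔ tgt e ∈ S) → p e) ∧
    x = fun v => if v ∈ S then (1 : ℝ) else 0}

variable {src tgt}

theorem cutIndicators_subset_constantAcross [DecidableEq V] (p : E → Prop) :
    cutIndicators src tgt p ⊆ constantAcross src tgt (fun e => ¬ p e) := by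
  rintro _ ⟨S, hS, rfl⟩ e he
  have hcross : src e ∈ S ↔ tgt e ∈ S := not_not.1 (mt (hS e) he)
  simp only [hcross]

theorem constantAcross_le_span_cutIndicators [Fintype V] [DecidableEq V] (p : E → Prop) :
    constantAcross src tgt (fun e => ¬ p e) ≤ Submodule.span ℝ (cutIndicators src tgt p) := by
  intro g hg
  have hlevel : g = ∑ c ∈ Finset.univ.image g,
      c • fun v => if v ∈ Finset.univ.filter (g · = c) then (1 : ℝ) else 0 := by
    funext v
    simp [Finset.sum_apply]
  rw [hlevel]
  refine Submodule.sum_mem _ fun c _ => Submodule.smul_mem _ _ (Submodule.subset_span ?_)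
  refine ⟨_, fun e he => ?_, rfl⟩
  by_contra hpe
  simp [hg e hpe] at he

theorem span_cutIndicators [Fintype V] [DecidableEq V] (p : E → Prop) :
    Submodule.span ℝ (cutIndicators src tgt p) = constantAcross src tgt (fun e => ¬ p e) :=
  le_antisymm (Submodule.span_le.2 (cutIndicators_subset_constantAcross p))
    (constantAcross_le_span_cutIndicators p)

theorem incidence_mulVec_apply [Fintype V] [DecidableEq V] {A : Matrix E V ℝ}
    (hA : ∀ e v, A e v = (if tgt e = v then 1 else 0) - (if src e = v then 1 else 0))
    (y : V → ℝ) (e : E) :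
    (A *ᵥ y) e = y (tgt e) - y (src e) := by
  simp [mulVec, dotProduct, hA, sub_mul, Finset.sum_sub_distrib]

end IncidenceMatrix

section ConnectionMatrix

variable {E V F : Type*} [Fintype E] [Fintype V] [DecidableEq E]
  {src tgt : E → V} {A : Matrix E V ℝ} {B : Matrix F E ℝ} (C : Finset E)

theorem connection_mulVec (hBA : ∀ y, B *ᵥ (A *ᵥ y) = 0) (φ : V → ℝ) :
    ((1/2 : ℝ) • (B * diagonal (fun e => if e ∈ C then (1 : ℝ) else -1) * A)) *ᵥ φ =
      B *ᵥ fun e => if e ∈ C then (A *ᵥ φ) e else 0 := by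
  have hproj : (fun e => if e ∈ C then (A *ᵥ φ) e else 0) = (1/2 : ℝ) •
      (diagonal (fun e => if e ∈ C then (1 : ℝ) else -1) *ᵥ (A *ᵥ φ) + A *ᵥ φ) := by
    funext e
    simp only [Pi.smul_apply, Pi.add_apply, mulVec_diagonal, smul_eq_mul]
    split <;> ring
  rw [hproj, mulVec_smul, mulVec_add, hBA, add_zero, smul_mulVec, mulVec_mulVec, mulVec_mulVec]

theorem connection_mulVec_eq_zero_iff [DecidableEq V]
    (hA : ∀ e v, A e v = (if tgt e = v then 1 else 0) - (if src e = v then 1 else 0))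
    (hexact : ∀ x : E → ℝ, B *ᵥ x = 0 ↔ ∃ y : V → ℝ, x = A *ᵥ y) (φ : V → ℝ) :
    ((1/2 : ℝ) • (B * diagonal (fun e => if e ∈ C then (1 : ℝ) else -1) * A)) *ᵥ φ = 0 ↔
      ∃ ψ ∈ constantAcross src tgt (· ∉ C), ∃ χ ∈ constantAcross src tgt (· ∈ C), ψ + χ = φ := by
  rw [connection_mulVec C (fun y => (hexact _).2 ⟨y, rfl⟩), hexact]
  constructor
  · rintro ⟨ψ, hψ⟩
    have hedge (e : E) := congr_fun hψ e
    simp only [incidence_mulVec_apply hA] at hedge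
    refine ⟨ψ, fun e he => ?_, φ - ψ, fun e he => ?_, add_sub_cancel ψ φ⟩
    · have := hedge e
      simp only [he, if_false] at this
      linarith
    · have := hedge e
      simp only [he, if_true, Pi.sub_apply] at this ⊢
      linarith
  · rintro ⟨ψ, hψ, χ, hχ, rfl⟩
    refine ⟨ψ, funext fun e => ?_⟩
    simp only [incidence_mulVec_apply hA]
    by_cases he : e ∈ C
    · simp only [he, if_true, Pi.add_apply, hχ e he]
      ring
    · simp only [he, if_false, hψ e he]
      ring

end ConnectionMatrix

theorem stmt9_general {E V F : Type*} [Fintype E] [Fintype V]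
    [DecidableEq E] [DecidableEq V]
    (src tgt : E → V)
    (A : Matrix E V ℝ)
    (hA : ∀ e v, A e v = (if tgt e = v then 1 else 0) - (if src e = v then 1 else 0))
    (B : Matrix F E ℝ)
    (hexact : ∀ x : E → ℝ, B.mulVec x = 0 ↔ ∃ y : V → ℝ, x = A.mulVec y)
    (C : Finset E)
    (P : Matrix E E ℝ)
    (hP : P = Matrix.diagonal (fun e => if e ∈ C then (1 : ℝ) else -1))
    (M : Matrix F V ℝ)
    (hM : M = (1/2 : ℝ) • (B * P * A)) :
    ∀ φ : V → ℝ, M.mulVec φ = 0 ↔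
      φ ∈ Submodule.span ℝ {x : V → ℝ | ∃ S : Finset V,
        ((∀ e : E, ¬(src e ∈ S ↔ tgt e ∈ S) → e ∈ C) ∨
         (∀ e : E, ¬(src e ∈ S ↔ tgt e ∈ S) → e ∉ C)) ∧
        x = fun v => if v ∈ S then (1 : ℝ) else 0} := by
  intro φ
  have hsplit : {x : V → ℝ | ∃ S : Finset V,
      ((∀ e : E, ¬(src e ∈ S ↔ tgt e ∈ S) → e ∈ C) ∨
       (∀ e : E, ¬(src e ∈ S ↔ tgt e ∈ S) → e ∉ C)) ∧
      x = fun v => if v ∈ S then (1 : ℝ) else 0} =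
      cutIndicators src tgt (· ∈ C) ∪ cutIndicators src tgt (· ∉ C) := by
    ext x
    simp only [cutIndicators, Set.mem_ofPred_eq, Set.mem_union, or_and_right, exists_or]
  rw [hsplit, Submodule.span_union, span_cutIndicators, span_cutIndicators, Submodule.mem_sup,
    hM, hP]
  simp only [not_not]
  exact connection_mulVec_eq_zero_iff C hA hexact φ

/-- For a connected planar circuit with `ker B = im A`, diagonal
involution `P` (`+1` on capacitive edges `C`, `-1` on inductive edges) and
connection matrix `M = (1/2) B P A`, a vector `φ ∈ ℝ^V` satisfies `M φ = 0` iff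
`φ` is a linear combination of indicator vectors of vertex subsets whose
induced edge-cut is homogeneous (entirely in `C` or entirely in its
complement).  (The all-ones vector is the indicator of `S = V`, whose cut is
empty and hence homogeneous.) -/
theorem stmt9 {E V F : Type*} [Fintype E] [Fintype V] [Fintype F]
    [DecidableEq E] [DecidableEq V]
    (src tgt : E → V)
    (hconn : ∀ u v : V, Relation.ReflTransGen
      (fun a b => ∃ e : E, (src e = a ∧ tgt e = b) ∨ (src e = b ∧ tgt e = a)) u v)
    (A : Matrix E V ℝ)
    (hA : ∀ e v, A e v = (if tgt e = v then 1 else 0) - (if src e = v then 1 else 0))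
    (B : Matrix F E ℝ)
    (hBA : B * A = 0)
    (hexact : ∀ x : E → ℝ, B.mulVec x = 0 ↔ ∃ y : V → ℝ, x = A.mulVec y)
    (C : Finset E)
    (P : Matrix E E ℝ)
    (hP : P = Matrix.diagonal (fun e => if e ∈ C then (1 : ℝ) else -1))
    (M : Matrix F V ℝ)
    (hM : M = (1/2 : ℝ) • (B * P * A)) :
    ∀ φ : V → ℝ, M.mulVec φ = 0 ↔
      φ ∈ Submodule.span ℝ {x : V → ℝ | ∃ S : Finset V,
        ((∀ e : E, ¬(src e ∈ S ↔ tgt e ∈ S) → e ∈ C) ∨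
         (∀ e : E, ¬(src e ∈ S ↔ tgt e ∈ S) → e ∉ C)) ∧
        x = fun v => if v ∈ S then (1 : ℝ) else 0} :=
  stmt9_general src tgt A hA B hexact C P hP M hM
end

section
/- Let G be a connected planar directed graph with edge partition E = C ∪ I and connection matrix M = (1/2) B P A as above. A row vector ψ ∈ R^F satisfies ψ^T M = 0 if and only if ψ^T B is a linear combination of signed loop vectors of cycles whose edges lie entirely in C or entirely in I (together with the trivial all-ones vector in the left kernel of B). -/
/-!
Since `B A = 0`, the edge vector `x = ψᵀ B` is a flow, and `ψᵀ M = 0` says that `x P` is a flow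
as well; as `x = x_C + x_I` and `x P = x_C - x_I`, this means that the restrictions `x_C`, `x_I`
of `x` to `C` and to `I` are both flows. Conversely every homogeneous loop vector restricts to
flows on `C` and on `I`. It remains to see that a flow supported in a set of edges is a combination
of loop vectors of cycles in that set: orient every edge of the support along the flow; by
conservation every head is again a tail, so one can walk through the support until the walk
closes up, and subtracting a suitable multiple of the resulting loop vector shrinks the support.
-/

open Matrix

/-- `b` is the signed loop vector of a closed walk all of whose edges satisfy
the predicate `good`. -/
def IsHomLoopVec {E V : Type*} [Fintype E] [DecidableEq E]
    (src tgt : E → V) (good : E → Prop) (b : E → ℝ) : Prop :=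
  ∃ (n : ℕ) (vs : Fin (n + 1) → V) (es : Fin n → E) (sgn : Fin n → ℝ),
    vs (Fin.last n) = vs 0 ∧
    (∀ i : Fin n,
      (sgn i = 1 ∧ src (es i) = vs i.castSucc ∧ tgt (es i) = vs i.succ) ∨
      (sgn i = -1 ∧ tgt (es i) = vs i.castSucc ∧ src (es i) = vs i.succ)) ∧
    (∀ i : Fin n, good (es i)) ∧
    b = fun e => ∑ i : Fin n, if es i = e then sgn i else 0


theorem Function.exists_isPeriodicPt_of_finite {α : Type*} [Finite α] (f : α → α) (x : α) :
    ∃ y n, 0 < n ∧ Function.IsPeriodicPt f n y := by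
  obtain ⟨a, b, hab, h⟩ := Finite.exists_ne_map_eq_of_infinite fun n : ℕ => f^[n] x
  wlog hlt : a < b generalizing a b
  · exact this b a hab.symm h.symm (by omega)
  refine ⟨f^[a] x, b - a, by omega, ?_⟩
  rw [Function.IsPeriodicPt, Function.IsFixedPt, ← Function.iterate_add_apply,
    Nat.sub_add_cancel hlt.le]
  exact h.symm

namespace IsHomLoopVec

variable {E V : Type*} [Fintype E] [DecidableEq E] {src tgt : E → V} {good : E → Prop}
  {b : E → ℝ}

theorem mono {good' : E → Prop} (hb : IsHomLoopVec src tgt good b)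
    (h : ∀ e, good e → good' e) : IsHomLoopVec src tgt good' b := by
  obtain ⟨n, vs, es, sgn, hclose, hstep, hgood, rfl⟩ := hb
  exact ⟨n, vs, es, sgn, hclose, hstep, fun i => h _ (hgood i), rfl⟩

theorem good_of_ne_zero (hb : IsHomLoopVec src tgt good b) {e : E} (he : b e ≠ 0) :
    good e := by
  obtain ⟨n, vs, es, sgn, -, -, hgood, rfl⟩ := hb
  obtain ⟨i, -, hi⟩ := Finset.exists_ne_zero_of_sum_ne_zero he
  exact (ite_ne_right_iff.mp hi).1 ▸ hgood i

theorem vecMul_eq_zero [DecidableEq V] {A : Matrix E V ℝ}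
    (hA : ∀ e v, A e v = (if tgt e = v then 1 else 0) - (if src e = v then 1 else 0))
    (hb : IsHomLoopVec src tgt good b) : b ᵥ* A = 0 := by
  obtain ⟨n, vs, es, sgn, hclose, hstep, -, rfl⟩ := hb
  funext v
  let δ : Fin (n + 1) → ℝ := fun j => if vs j = v then 1 else 0
  have hterm : ∀ i, sgn i * A (es i) v = δ i.succ - δ i.castSucc := by
    intro i
    rcases hstep i with ⟨hs, h₁, h₂⟩ | ⟨hs, h₁, h₂⟩ <;> simp only [δ, hA, hs, h₁, h₂] <;> ring
  have hsum : ∑ e, (∑ i, if es i = e then sgn i else 0) * A e v = ∑ i, sgn i * A (es i) v := by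
    simp only [Finset.sum_mul, ite_mul, zero_mul]
    rw [Finset.sum_comm]
    simp
  have hsucc := Fin.sum_univ_succ δ
  have hcastSucc := Fin.sum_univ_castSucc δ
  have hlast : δ (Fin.last n) = δ 0 := by simp only [δ, hclose]
  simp only [vecMul, dotProduct, hsum, hterm, Finset.sum_sub_distrib, Pi.zero_apply]
  linarith

end IsHomLoopVec

noncomputable section FlowDecomposition

variable {E V : Type*} (src tgt : E → V) (x : E → ℝ)

def flowTail (e : E) : V := if 0 < x e then src e else tgt e

def flowHead (e : E) : V := if 0 < x e then tgt e else src e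

def flowSign (e : E) : ℝ := if 0 < x e then 1 else -1

variable {src tgt x}

theorem mul_incidence_eq_abs_mul [DecidableEq V] {A : Matrix E V ℝ}
    (hA : ∀ e v, A e v = (if tgt e = v then 1 else 0) - (if src e = v then 1 else 0))
    (e : E) (v : V) :
    x e * A e v = |x e| * ((if flowHead src tgt x e = v then 1 else 0) -
      (if flowTail src tgt x e = v then 1 else 0)) := by
  rcases lt_or_ge 0 (x e) with h | h
  · simp only [hA, flowHead, flowTail, if_pos h, abs_of_pos h]
  · simp only [hA, flowHead, flowTail, if_neg h.not_gt, abs_of_nonpos h]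
    ring

theorem exists_flowTail_eq_flowHead [Fintype E] [DecidableEq V] {A : Matrix E V ℝ}
    (hA : ∀ e v, A e v = (if tgt e = v then 1 else 0) - (if src e = v then 1 else 0))
    (hx : x ᵥ* A = 0) {e : E} (he : x e ≠ 0) :
    ∃ e', x e' ≠ 0 ∧ flowTail src tgt x e' = flowHead src tgt x e := by
  by_contra! hno
  set v := flowHead src tgt x e
  -- no support edge leaves `v`, so all of them contribute nonnegatively to the net inflow at `v`
  have hnonneg : ∀ e', 0 ≤ x e' * A e' v := by
    intro e'
    by_cases h : x e' = 0
    · simp [h]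
    · rw [mul_incidence_eq_abs_mul hA, if_neg (hno e' h)]
      split_ifs <;> simp
  have hpos : 0 < x e * A e v := by
    rw [mul_incidence_eq_abs_mul hA, if_pos rfl, if_neg (hno e he)]
    simpa using he
  have hzero : ∑ e', x e' * A e' v = 0 := congrFun hx v
  linarith [Finset.sum_pos' (fun e' _ => hnonneg e') ⟨e, Finset.mem_univ _, hpos⟩]

theorem isHomLoopVec_of_flowWalk [Fintype E] [DecidableEq E] {good : E → Prop} (w : ℕ → E)
    (hgood : ∀ k, good (w k))
    (hw : ∀ k, flowTail src tgt x (w (k + 1)) = flowHead src tgt x (w k))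
    {d : ℕ} (hd : w d = w 0) :
    IsHomLoopVec src tgt good
      (fun e => ∑ k : Fin d, if w k = e then flowSign x (w k) else 0) := by
  refine ⟨d, fun k => flowTail src tgt x (w k), fun k => w k, fun k => flowSign x (w k),
    by simp [hd], fun k => ?_, fun k => hgood k, rfl⟩
  have hnext := hw k
  by_cases h : 0 < x (w k)
  · left
    simp_all [flowSign, flowTail, flowHead]
  · right
    simp_all [flowSign, flowTail, flowHead]

-- Each traversal of an edge follows the flow, so the signs do not cancel.
theorem sum_flowSign_ne_zero [DecidableEq E] {d : ℕ} (w : ℕ → E) (hd : 0 < d) :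
    (∑ k : Fin d, if w k = w 0 then flowSign x (w k) else 0) ≠ 0 := by
  have hterm : ∀ k : Fin d, (if w k = w 0 then flowSign x (w k) else 0) =
      flowSign x (w 0) * if w k = w 0 then 1 else 0 := by
    intro k
    split_ifs with h
    · rw [h, mul_one]
    · rw [mul_zero]
  have hsign : flowSign x (w 0) ≠ 0 := by
    unfold flowSign
    split_ifs <;> norm_num
  have hcount : 0 < ∑ k : Fin d, if w k = w 0 then (1 : ℝ) else 0 :=
    Finset.sum_pos' (fun k _ => by positivity) ⟨⟨0, hd⟩, Finset.mem_univ _, by simp⟩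
  rw [Finset.sum_congr rfl fun k _ => hterm k, ← Finset.mul_sum]
  exact mul_ne_zero hsign hcount.ne'

theorem exists_isHomLoopVec_of_flow [Fintype E] [DecidableEq E] [DecidableEq V]
    {A : Matrix E V ℝ}
    (hA : ∀ e v, A e v = (if tgt e = v then 1 else 0) - (if src e = v then 1 else 0))
    (hx : x ᵥ* A = 0) (hx0 : x ≠ 0) :
    ∃ b, IsHomLoopVec src tgt (fun e => x e ≠ 0) b ∧ ∃ e, b e ≠ 0 := by
  choose next hnext using fun e : {e // x e ≠ 0} => exists_flowTail_eq_flowHead hA hx e.2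
  let f : {e // x e ≠ 0} → {e // x e ≠ 0} := fun e => ⟨next e, (hnext e).1⟩
  obtain ⟨e₀, he₀⟩ := Function.ne_iff.mp hx0
  obtain ⟨p, d, hd, hp⟩ := Function.exists_isPeriodicPt_of_finite f ⟨e₀, he₀⟩
  let w : ℕ → E := fun k => (f^[k] p).1
  have hw : ∀ k, flowTail src tgt x (w (k + 1)) = flowHead src tgt x (w k) := by
    intro k
    simp only [w, Function.iterate_succ_apply']
    exact (hnext _).2
  have hclose : w d = w 0 := congrArg Subtype.val hp
  exact ⟨_, isHomLoopVec_of_flowWalk w (fun k => (f^[k] p).2) hw hclose, w 0,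
    sum_flowSign_ne_zero w hd⟩

end FlowDecomposition

section Span

variable {E V : Type*} [Fintype E] [DecidableEq E] [DecidableEq V] {src tgt : E → V}
  {A : Matrix E V ℝ}

-- Subtracting the right multiple of a loop inside the support of `x` removes an edge from the
-- support and keeps the flow condition.
theorem mem_span_isHomLoopVec_of_flow
    (hA : ∀ e v, A e v = (if tgt e = v then 1 else 0) - (if src e = v then 1 else 0))
    {good : E → Prop} (x : E → ℝ) (hgood : ∀ e, x e ≠ 0 → good e) (hx : x ᵥ* A = 0) :
    x ∈ Submodule.span ℝ {b | IsHomLoopVec src tgt good b} := by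
  induction hn : (Function.support x).ncard using Nat.strong_induction_on generalizing x with
  | _ n ih =>
  by_cases hx0 : x = 0
  · exact hx0 ▸ Submodule.zero_mem _
  obtain ⟨b, hb, e₀, hbe₀⟩ := exists_isHomLoopVec_of_flow hA hx hx0
  set c := x e₀ / b e₀
  have hxe₀ : x e₀ ≠ 0 := hb.good_of_ne_zero hbe₀
  have hsupp : Function.support (x - c • b) ⊂ Function.support x := by
    refine ⟨fun e he => ?_, fun h => h hxe₀ ?_⟩
    · by_contra hxe
      have hbe : b e = 0 := by_contra fun h => hxe (hb.good_of_ne_zero h)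
      simp_all
    · simp [c, hbe₀]
  have hy := ih _ (hn ▸ Set.ncard_lt_ncard hsupp) (x - c • b)
    (fun e he => hgood e (hsupp.1 he))
    (by rw [sub_vecMul, smul_vecMul, hx, hb.vecMul_eq_zero hA, smul_zero, sub_zero]) rfl
  rw [← sub_add_cancel x (c • b)]
  exact Submodule.add_mem _ hy
    (Submodule.smul_mem _ _ (Submodule.subset_span (hb.mono hgood)))

theorem mem_span_isHomLoopVec_iff
    (hA : ∀ e v, A e v = (if tgt e = v then 1 else 0) - (if src e = v then 1 else 0))
    (s : Set E) (x : E → ℝ) :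
    x ∈ Submodule.span ℝ {b | IsHomLoopVec src tgt (· ∈ s) b ∨ IsHomLoopVec src tgt (· ∉ s) b} ↔
      s.indicator x ᵥ* A = 0 ∧ sᶜ.indicator x ᵥ* A = 0 := by
  constructor
  · intro hx
    induction hx using Submodule.span_induction with
    | mem b hb =>
      rcases hb with hb | hb
      · have hsupp : Function.support b ⊆ s := fun e => hb.good_of_ne_zero
        rw [Set.indicator_eq_self.2 hsupp,
          Set.indicator_eq_zero'.2 (Set.disjoint_compl_right_iff_subset.2 hsupp),
          hb.vecMul_eq_zero hA, zero_vecMul]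
        exact ⟨rfl, rfl⟩
      · have hsupp : Function.support b ⊆ sᶜ := fun e => hb.good_of_ne_zero
        rw [Set.indicator_eq_self.2 hsupp,
          Set.indicator_eq_zero'.2 (Set.subset_compl_iff_disjoint_right.1 hsupp),
          hb.vecMul_eq_zero hA, zero_vecMul]
        exact ⟨rfl, rfl⟩
    | zero => simp
    | add a b _ _ ha hb =>
      simp only [Set.indicator_add', add_vecMul, ha.1, ha.2, hb.1, hb.2, add_zero, and_self]
    | smul r a _ ha =>
      have hsmul : ∀ t : Set E, t.indicator (r • a) = r • t.indicator a := fun t =>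
        Set.indicator_const_smul t r a
      simp only [hsmul, smul_vecMul, ha.1, ha.2, smul_zero, and_self]
  · rintro ⟨hs, hsc⟩
    rw [← Set.indicator_self_add_compl s x]
    refine Submodule.add_mem _ ?_ ?_
    · exact Submodule.span_mono (fun b => Or.inl) <| mem_span_isHomLoopVec_of_flow
        (good := (· ∈ s)) hA _ (fun e => Set.mem_of_indicator_ne_zero) hs
    · exact Submodule.span_mono (fun b => Or.inr) <| mem_span_isHomLoopVec_of_flow
        (good := (· ∉ s)) hA _ (fun e => Set.mem_of_indicator_ne_zero) hsc

end Span

theorem stmt10_general {E V F : Type*} [Fintype E] [Fintype F]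
    [DecidableEq E] [DecidableEq V]
    (src tgt : E → V)
    (A : Matrix E V ℝ)
    (hA : ∀ e v, A e v = (if tgt e = v then 1 else 0) - (if src e = v then 1 else 0))
    (B : Matrix F E ℝ)
    (hBA : B * A = 0)
    (C : Finset E)
    (P : Matrix E E ℝ)
    (hP : P = Matrix.diagonal (fun e => if e ∈ C then (1 : ℝ) else -1))
    (M : Matrix F V ℝ)
    (hM : M = (1/2 : ℝ) • (B * P * A)) :
    ∀ ψ : F → ℝ, Matrix.vecMul ψ M = 0 ↔
      Matrix.vecMul ψ B ∈ Submodule.span ℝ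
        {b : E → ℝ | IsHomLoopVec src tgt (· ∈ C) b ∨
                     IsHomLoopVec src tgt (· ∉ C) b} := by
  intro ψ
  set x := ψ ᵥ* B
  refine Iff.trans ?_ (mem_span_isHomLoopVec_iff hA (C : Set E) x).symm
  set xC := (C : Set E).indicator x
  set xI := (C : Set E)ᶜ.indicator x
  have hflow : xC ᵥ* A + xI ᵥ* A = 0 := by
    rw [← add_vecMul, Set.indicator_self_add_compl, vecMul_vecMul, hBA, vecMul_zero]
  have hxP : x ᵥ* P = xC - xI := by
    funext e
    by_cases he : e ∈ C <;> simp [hP, vecMul_diagonal, xC, xI, he]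
  have hψM : ψ ᵥ* M = (1 / 2 : ℝ) • (xC ᵥ* A - xI ᵥ* A) := by
    rw [hM, vecMul_smul, ← vecMul_vecMul, ← vecMul_vecMul, hxP, sub_vecMul]
  rw [hψM, smul_eq_zero, sub_eq_zero, eq_neg_of_add_eq_zero_right hflow, self_eq_neg]
  norm_num

/-- For a connected planar circuit with connection matrix
`M = (1/2) B P A`, a row vector `ψ ∈ ℝ^F` satisfies `ψᵀ M = 0` iff `ψᵀ B` is a
linear combination of signed loop vectors of homogeneous cycles (cycles lying
entirely in `C` or entirely in `I = Cᶜ`).  The trivial all-ones vector of the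
left kernel of `B` is accounted for since then `ψᵀ B = 0`. -/
theorem stmt10 {E V F : Type*} [Fintype E] [Fintype V] [Fintype F]
    [DecidableEq E] [DecidableEq V]
    (src tgt : E → V)
    (hconn : ∀ u v : V, Relation.ReflTransGen
      (fun a b => ∃ e : E, (src e = a ∧ tgt e = b) ∨ (src e = b ∧ tgt e = a)) u v)
    (A : Matrix E V ℝ)
    (hA : ∀ e v, A e v = (if tgt e = v then 1 else 0) - (if src e = v then 1 else 0))
    (B : Matrix F E ℝ)
    (hBA : B * A = 0)
    (hexact : ∀ x : E → ℝ, B.mulVec x = 0 ↔ ∃ y : V → ℝ, x = A.mulVec y)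
    (C : Finset E)
    (P : Matrix E E ℝ)
    (hP : P = Matrix.diagonal (fun e => if e ∈ C then (1 : ℝ) else -1))
    (M : Matrix F V ℝ)
    (hM : M = (1/2 : ℝ) • (B * P * A)) :
    ∀ ψ : F → ℝ, Matrix.vecMul ψ M = 0 ↔
      Matrix.vecMul ψ B ∈ Submodule.span ℝ
        {b : E → ℝ | IsHomLoopVec src tgt (· ∈ C) b ∨
                     IsHomLoopVec src tgt (· ∉ C) b} :=
  stmt10_general src tgt A hA B hBA C P hP M hM
end

section
/- Let G be a connected planar directed graph with edge partition E = C ∪ I, let Δ_C (resp. Δ_I) be the dimension of the space of signed loop vectors of cycles entirely in C (resp. I), and let Γ_C (resp. Γ_I) be the dimension of the space of indicator vectors (mod all-ones) of vertex subsets whose edge-cut lies entirely in C (resp. I). Then |F| - 1 - Δ_I - Δ_C = |V| - 1 - Γ_I - Γ_C, i.e., the number of dynamical degrees of freedom computed from faces equals that computed from vertices. -/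
open Matrix Module

/-- Δ: the dimension of the space spanned by signed loop vectors of cycles all
of whose edges satisfy `good`. -/
noncomputable def loopDim {E V : Type*} [Fintype E] [DecidableEq E]
    (src tgt : E → V) (good : E → Prop) : ℕ :=
  finrank ℝ (Submodule.span ℝ {b : E → ℝ | IsHomLoopVec src tgt good b})

/-- Γ: the dimension, modulo the all-ones vector, of the space spanned by
indicator vectors of vertex subsets whose induced edge-cut consists only of
edges satisfying `good`. -/
noncomputable def cutDim {E V : Type*} [Fintype V] [DecidableEq V]
    (src tgt : E → V) (good : E → Prop) : ℕ :=
  finrank ℝ (Submodule.span ℝ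
    ((Submodule.span ℝ {(fun _ => (1 : ℝ) : V → ℝ)}).mkQ ''
      {x : V → ℝ | ∃ S : Finset V,
        (∀ e : E, ¬(src e ∈ S ↔ tgt e ∈ S) → good e) ∧
        x = fun v => if v ∈ S then (1 : ℝ) else 0}))

/-!
For an edge predicate `p`, let `h(p)` be the dimension of the functions on `V` that are constant
across every `p`-edge (one dimension per connected component of the `p`-subgraph).
Loop vectors of `p`-cycles span the kernel of the transposed incidence matrix of the `p`-subgraph:
a functional killing all closed walks is the coboundary of a potential. Rank–nullity and
`rank Nᵀ = rank N` then give `Δ_p = |E_p| - |V| + h(p)`. Indicators of vertex sets whose cut lies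
in `p` span the functions constant across the non-`p` edges, so `Γ_p = h(¬p) - 1`.
Adding these for `p = I` and `p = C`, the `h`-terms cancel and Euler's formula finishes;
`V ≠ ∅` (behind the `- 1`) follows from `rank B = |F| - 1`.
-/

section Incidence

variable {E V : Type*} [Fintype V] [DecidableEq V] (src tgt : E → V)

def incidence : Matrix E V ℝ := of fun e => Pi.single (tgt e) 1 - Pi.single (src e) 1

theorem incidence_mulVec (f : V → ℝ) (e : E) :
    (incidence src tgt *ᵥ f) e = f (tgt e) - f (src e) := by
  simp only [incidence, mulVec, of_apply, sub_dotProduct, single_dotProduct, one_mul]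

def constAlongEdges (good : E → Prop) : Submodule ℝ (V → ℝ) where
  carrier := {f | ∀ e, good e → f (src e) = f (tgt e)}
  add_mem' hf hg e he := by simp [hf e he, hg e he]
  zero_mem' _ _ := rfl
  smul_mem' c f hf e he := by simp [hf e he]

theorem ker_mulVecLin_incidence_subtype (good : E → Prop) :
    LinearMap.ker (incidence (fun e : {e // good e} => src e) (fun e => tgt e)).mulVecLin
      = constAlongEdges src tgt good := by
  ext f
  simp only [LinearMap.mem_ker, mulVecLin_apply, funext_iff, incidence_mulVec, Pi.zero_apply,
    sub_eq_zero, Subtype.forall]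
  exact forall₂_congr fun _ _ => eq_comm

end Incidence

section Walks

variable {E V : Type*} [DecidableEq E] (src tgt : E → V) (good : E → Prop)

inductive IsWalkVec : V → V → (E → ℝ) → Prop
  | nil (v : V) : IsWalkVec v v 0
  | cons_fwd {e : E} {w : V} {b : E → ℝ} :
      good e → IsWalkVec (tgt e) w b → IsWalkVec (src e) w (Pi.single e 1 + b)
  | cons_bwd {e : E} {w : V} {b : E → ℝ} :
      good e → IsWalkVec (src e) w b → IsWalkVec (tgt e) w (Pi.single e (-1) + b)

namespace IsWalkVec

variable {src tgt good}

theorem append {u v w : V} {b c : E → ℝ} (h₁ : IsWalkVec src tgt good u v b)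
    (h₂ : IsWalkVec src tgt good v w c) : IsWalkVec src tgt good u w (b + c) := by
  induction h₁ with
  | nil => simpa using h₂
  | cons_fwd he _ ih => simpa [add_assoc] using cons_fwd he (ih h₂)
  | cons_bwd he _ ih => simpa [add_assoc] using cons_bwd he (ih h₂)

theorem edge {e : E} (he : good e) : IsWalkVec src tgt good (src e) (tgt e) (Pi.single e 1) := by
  simpa using cons_fwd he (nil (tgt e))

theorem reverse {u v : V} {b : E → ℝ} (h : IsWalkVec src tgt good u v b) :
    IsWalkVec src tgt good v u (-b) := by
  induction h with
  | nil v => simpa using nil v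
  | @cons_fwd e _ b he _ ih =>
    convert ih.append (cons_bwd he (nil (src e))) using 1
    rw [add_zero, Pi.single_neg, neg_add_rev, add_comm]
  | @cons_bwd e _ b he _ ih =>
    convert ih.append (edge he) using 1
    rw [Pi.single_neg, neg_add_rev, neg_neg, add_comm]

theorem exists_fin_walk {u v : V} {b : E → ℝ} (h : IsWalkVec src tgt good u v b) :
    ∃ (n : ℕ) (vs : Fin (n + 1) → V) (es : Fin n → E) (sgn : Fin n → ℝ),
      vs 0 = u ∧ vs (Fin.last n) = v ∧
      (∀ i : Fin n,
        (sgn i = 1 ∧ src (es i) = vs i.castSucc ∧ tgt (es i) = vs i.succ) ∨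
        (sgn i = -1 ∧ tgt (es i) = vs i.castSucc ∧ src (es i) = vs i.succ)) ∧
      (∀ i : Fin n, good (es i)) ∧
      b = fun e => ∑ i : Fin n, if es i = e then sgn i else 0 := by
  induction h with
  | nil v => exact ⟨0, fun _ => v, Fin.elim0, Fin.elim0, rfl, rfl, nofun, nofun, rfl⟩
  | @cons_fwd e w b he _ ih =>
    obtain ⟨n, vs, es, sgn, h0, hlast, hstep, hgood, rfl⟩ := ih
    refine ⟨n + 1, Fin.cons (src e) vs, Fin.cons e es, Fin.cons 1 sgn, rfl, ?_, ?_, ?_, ?_⟩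
    · simpa [← Fin.succ_last] using hlast
    · refine Fin.cases (Or.inl ⟨rfl, rfl, by simpa using h0.symm⟩) fun i => ?_
      simpa [← Fin.succ_castSucc] using hstep i
    · exact Fin.cases he hgood
    · funext x
      simp [Fin.sum_univ_succ, Pi.single_apply, eq_comm]
  | @cons_bwd e w b he _ ih =>
    obtain ⟨n, vs, es, sgn, h0, hlast, hstep, hgood, rfl⟩ := ih
    refine ⟨n + 1, Fin.cons (tgt e) vs, Fin.cons e es, Fin.cons (-1) sgn, rfl, ?_, ?_, ?_, ?_⟩
    · simpa [← Fin.succ_last] using hlast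
    · refine Fin.cases (Or.inr ⟨rfl, rfl, by simpa using h0.symm⟩) fun i => ?_
      simpa [← Fin.succ_castSucc] using hstep i
    · exact Fin.cases he hgood
    · funext x
      simp [Fin.sum_univ_succ, Pi.single_apply, eq_comm]

theorem isHomLoopVec [Fintype E] {v : V} {b : E → ℝ} (h : IsWalkVec src tgt good v v b) :
    IsHomLoopVec src tgt good b := by
  obtain ⟨n, vs, es, sgn, h0, hlast, hstep, hgood, hb⟩ := h.exists_fin_walk
  exact ⟨n, vs, es, sgn, hlast.trans h0.symm, hstep, hgood, hb⟩

end IsWalkVec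

end Walks

section Potential

variable {E V : Type*} [DecidableEq E] (src tgt : E → V) (good : E → Prop)

/-- Being joined by a walk is an equivalence relation; integrating `φ` along a walk from a fixed
representative of each class is well defined because `φ` vanishes on closed walks. -/
theorem exists_potential (φ : Module.Dual ℝ (E → ℝ))
    (hφ : ∀ v b, IsWalkVec src tgt good v v b → φ b = 0) :
    ∃ f : V → ℝ, ∀ e, good e → φ (Pi.single e 1) = f (tgt e) - f (src e) := by
  let s : Setoid V :=
    ⟨fun u v => ∃ b, IsWalkVec src tgt good u v b,
      ⟨fun v => ⟨0, .nil v⟩, fun ⟨b, h⟩ => ⟨-b, h.reverse⟩,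
        fun ⟨b, h⟩ ⟨c, h'⟩ => ⟨b + c, h.append h'⟩⟩⟩
  choose b hb using fun v => Quotient.mk_out (s := s) v
  refine ⟨fun v => φ (b v), fun e he => ?_⟩
  have hq : Quotient.mk s (src e) = Quotient.mk s (tgt e) := Quotient.sound ⟨_, .edge he⟩
  have hback : IsWalkVec src tgt good (tgt e) (Quotient.mk s (src e)).out (-b (tgt e)) := by
    rw [hq]; exact (hb _).reverse
  have hloop := hφ _ _ (((hb (src e)).append (.edge he)).append hback)
  simp only [map_add, map_neg] at hloop
  linarith

end Potential

theorem sum_fin_succ_sub_castSucc {M : Type*} [AddCommGroup M] :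
    ∀ {n : ℕ} (g : Fin (n + 1) → M), ∑ i : Fin n, (g i.succ - g i.castSucc) = g (Fin.last n) - g 0
  | 0, g => by simp
  | n + 1, g => by
    rw [Fin.sum_univ_castSucc]
    simp only [Fin.succ_castSucc]
    rw [sum_fin_succ_sub_castSucc (fun i => g i.castSucc), Fin.succ_last]
    simp only [Fin.castSucc_zero]
    abel

section CycleSpace

variable {E V : Type*} [Fintype E] [DecidableEq E] [DecidableEq V] (src tgt : E → V)
  (good : E → Prop)

def cycleSpace : Submodule ℝ (E → ℝ) where
  carrier := {y | (∀ e, ¬ good e → y e = 0) ∧ (incidence src tgt)ᵀ *ᵥ y = 0}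
  add_mem' hx hy := ⟨fun e he => by simp [hx.1 e he, hy.1 e he], by simp [mulVec_add, hx.2, hy.2]⟩
  zero_mem' := ⟨fun _ _ => rfl, mulVec_zero _⟩
  smul_mem' c y hy := ⟨fun e he => by simp [hy.1 e he], by simp [mulVec_smul, hy.2]⟩

variable {src tgt good} in
theorem IsHomLoopVec.mem_cycleSpace {b : E → ℝ} (hb : IsHomLoopVec src tgt good b) :
    b ∈ cycleSpace src tgt good := by
  obtain ⟨n, vs, es, sgn, hclosed, hstep, hgood, rfl⟩ := hb
  refine ⟨fun e he => Finset.sum_eq_zero fun i _ => if_neg fun h : es i = e => he (h ▸ hgood i), ?_⟩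
  have hsum : (fun e => ∑ i, if es i = e then sgn i else 0) = ∑ i, Pi.single (es i) (sgn i) := by
    funext e
    simp [Finset.sum_apply, Pi.single_apply, eq_comm]
  have hstep' : ∀ i, (incidence src tgt)ᵀ *ᵥ Pi.single (es i) (sgn i)
      = Pi.single (vs i.succ) 1 - Pi.single (vs i.castSucc) 1 := by
    intro i
    funext v
    rcases hstep i with ⟨hs, h₁, h₂⟩ | ⟨hs, h₁, h₂⟩ <;> simp [mulVec_single, incidence, hs, h₁, h₂]
  rw [hsum, mulVec_sum, Finset.sum_congr rfl fun i _ => hstep' i,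
    sum_fin_succ_sub_castSucc (fun j => Pi.single (vs j) 1), hclosed, sub_self]

variable [Fintype V]

theorem cycleSpace_le_span_isHomLoopVec :
    cycleSpace src tgt good ≤ Submodule.span ℝ {b | IsHomLoopVec src tgt good b} := by
  intro y hy
  by_contra hy'
  obtain ⟨φ, hφy, hφ⟩ := Submodule.exists_dual_map_eq_bot_of_notMem hy' inferInstance
  obtain ⟨f, hf⟩ := exists_potential src tgt good φ fun _ _ h =>
    LinearMap.le_ker_iff_map.2 hφ (Submodule.subset_span h.isHomLoopVec)
  refine hφy ?_
  calc φ y = ∑ e, y e * φ (Pi.single e 1) := by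
        conv_lhs => rw [← Finset.univ_sum_single y]
        refine (map_sum _ _ _).trans (Finset.sum_congr rfl fun e _ => ?_)
        rw [← smul_eq_mul, ← map_smul, ← Pi.single_smul, smul_eq_mul, mul_one]
    _ = y ⬝ᵥ (incidence src tgt *ᵥ f) := by
        refine Finset.sum_congr rfl fun e _ => ?_
        by_cases he : good e
        · rw [hf e he, incidence_mulVec]
        · rw [hy.1 e he, zero_mul, zero_mul]
    _ = 0 := by rw [dotProduct_mulVec, ← mulVec_transpose, hy.2, zero_dotProduct]

theorem span_isHomLoopVec :
    Submodule.span ℝ {b | IsHomLoopVec src tgt good b} = cycleSpace src tgt good :=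
  le_antisymm (Submodule.span_le.2 fun _ hb => hb.mem_cycleSpace)
    (cycleSpace_le_span_isHomLoopVec src tgt good)

end CycleSpace

section Dimension

variable {E V : Type*} [Fintype E] [DecidableEq V] (src tgt : E → V) (good : E → Prop)
  [DecidablePred good]

theorem incidence_transpose_mulVec_extend (x : {e // good e} → ℝ) :
    (incidence src tgt)ᵀ *ᵥ Function.extend Subtype.val x 0
      = (incidence (fun e : {e // good e} => src e) (fun e => tgt e))ᵀ *ᵥ x := by
  funext v
  simp only [mulVec, dotProduct, transpose_apply]
  rw [← Fintype.sum_subtype_add_sum_subtype good, Fintype.sum_eq_zero (fun e : {e // ¬ good e} => _)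
    fun e => by rw [Function.extend_apply' _ _ _ fun ⟨a, ha⟩ => e.2 (ha ▸ a.2), Pi.zero_apply,
      mul_zero], add_zero]
  exact Finset.sum_congr rfl fun e _ => by rw [Subtype.val_injective.extend_apply]; rfl

theorem cycleSpace_eq_map_ker :
    cycleSpace src tgt good
      = (LinearMap.ker (incidence (fun e : {e // good e} => src e) (fun e => tgt e))ᵀ.mulVecLin).map
          (Function.ExtendByZero.linearMap ℝ Subtype.val) := by
  ext y
  constructor
  · rintro ⟨hsupp, hy⟩
    have hext : Function.extend Subtype.val (fun e : {e // good e} => y e) 0 = y := by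
      funext e
      by_cases he : good e
      · exact Subtype.val_injective.extend_apply _ _ (⟨e, he⟩ : {e // good e})
      · rw [Function.extend_apply' _ _ _ fun ⟨a, ha⟩ => he (ha ▸ a.2), hsupp e he, Pi.zero_apply]
    refine ⟨fun e => y e, ?_, hext⟩
    rw [SetLike.mem_coe, LinearMap.mem_ker, mulVecLin_apply, ← incidence_transpose_mulVec_extend,
      hext, hy]
  · rintro ⟨x, hx, rfl⟩
    refine ⟨fun e he => Function.extend_apply' _ _ _ fun ⟨a, ha⟩ => he (ha ▸ a.2), ?_⟩
    change _ *ᵥ Function.extend Subtype.val x 0 = 0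
    rw [incidence_transpose_mulVec_extend]
    exact hx

variable [Fintype V]

theorem finrank_cycleSpace_add_card :
    finrank ℝ (cycleSpace src tgt good) + Fintype.card V
      = Fintype.card {e // good e} + finrank ℝ (constAlongEdges src tgt good) := by
  set N := incidence (fun e : {e // good e} => src e) (fun e => tgt e)
  have hinj : Function.Injective
      (Function.ExtendByZero.linearMap ℝ (Subtype.val : {e // good e} → E)) :=
    Function.extend_injective Subtype.val_injective (0 : E → ℝ)
  have hcycle : finrank ℝ (cycleSpace src tgt good) = finrank ℝ (LinearMap.ker Nᵀ.mulVecLin) := by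
    rw [cycleSpace_eq_map_ker]
    exact (Submodule.equivMapOfInjective _ hinj _).finrank_eq.symm
  have hNt := LinearMap.finrank_range_add_finrank_ker Nᵀ.mulVecLin
  have hN := LinearMap.finrank_range_add_finrank_ker N.mulVecLin
  have hrank := rank_transpose N
  rw [ker_mulVecLin_incidence_subtype] at hN
  simp only [rank, Module.finrank_fintype_fun_eq_card] at hNt hN hrank
  omega

end Dimension

theorem finrank_map_mkQ_span_singleton_add_one {K M : Type*} [DivisionRing K] [AddCommGroup M]
    [Module K M] [FiniteDimensional K M] {W : Submodule K M} {v : M} (hv : v ≠ 0) (hvW : v ∈ W) :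
    finrank K (W.map (K ∙ v).mkQ) + 1 = finrank K W := by
  have hle : K ∙ v ≤ W := (Submodule.span_singleton_le_iff_mem v W).2 hvW
  have hker : finrank K (LinearMap.ker ((K ∙ v).mkQ ∘ₗ W.subtype)) = 1 := by
    rw [LinearMap.ker_comp, Submodule.ker_mkQ, (Submodule.comapSubtypeEquivOfLe hle).finrank_eq,
      finrank_span_singleton hv]
  have h := LinearMap.finrank_range_add_finrank_ker ((K ∙ v).mkQ ∘ₗ W.subtype)
  rwa [LinearMap.range_comp, Submodule.range_subtype, hker] at h

section Cuts

variable {E V : Type*} [Fintype V] [DecidableEq V] (src tgt : E → V) (good : E → Prop)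

/-- A function constant across the bad edges is a combination of the indicators of its level sets,
whose edge-cuts consist of good edges only. -/
theorem span_goodCutIndicators :
    Submodule.span ℝ {x : V → ℝ | ∃ S : Finset V,
        (∀ e : E, ¬(src e ∈ S ↔ tgt e ∈ S) → good e) ∧
        x = fun v => if v ∈ S then (1 : ℝ) else 0}
      = constAlongEdges src tgt fun e => ¬ good e := by
  refine le_antisymm (Submodule.span_le.2 ?_) fun f hf => ?_
  · rintro _ ⟨S, hS, rfl⟩ e he
    simp [not_not.1 (mt (hS e) he)]
  · have hlevel : f = ∑ r ∈ Finset.univ.image f,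
        r • fun v => if v ∈ Finset.univ.filter (f · = r) then (1 : ℝ) else 0 := by
      funext v
      simp [Finset.sum_apply]
    rw [hlevel]
    refine Submodule.sum_mem _ fun r _ =>
      Submodule.smul_mem _ _ (Submodule.subset_span ⟨_, ?_, rfl⟩)
    intro e he
    by_contra hbad
    simp [hf e hbad] at he

theorem cutDim_add_one [Nonempty V] :
    cutDim src tgt good + 1 = finrank ℝ (constAlongEdges src tgt fun e => ¬ good e) := by
  rw [cutDim, Submodule.span_image, span_goodCutIndicators]
  exact finrank_map_mkQ_span_singleton_add_one (Function.const_ne_zero.2 one_ne_zero)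
    fun _ _ => rfl

end Cuts

theorem loopDim_add_card {E V : Type*} [Fintype E] [Fintype V] [DecidableEq E] [DecidableEq V]
    (src tgt : E → V) (good : E → Prop) [DecidablePred good] :
    loopDim src tgt good + Fintype.card V
      = Fintype.card {e // good e} + finrank ℝ (constAlongEdges src tgt good) := by
  rw [loopDim, span_isHomLoopVec]
  exact finrank_cycleSpace_add_card src tgt good

theorem stmt11_general {E V F : Type*} [Fintype E] [Fintype V] [Fintype F]
    [DecidableEq E] [DecidableEq V]
    (src tgt : E → V)
    (B : Matrix F E ℝ)
    (hrankB : B.rank = Fintype.card F - 1)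
    (hEuler : (Fintype.card V : ℤ) - Fintype.card E + Fintype.card F = 2)
    (C : Finset E) :
    Fintype.card F + cutDim src tgt (· ∉ C) + cutDim src tgt (· ∈ C)
      = Fintype.card V + loopDim src tgt (· ∉ C) + loopDim src tgt (· ∈ C) := by
  have : Nonempty V := by
    by_contra hV
    have : IsEmpty E := ⟨fun e => hV ⟨src e⟩⟩
    have hB : B.rank = 0 := by simpa using B.rank_le_card_width
    simp [not_nonempty_iff.1 hV] at hEuler
    omega
  have hloopI := loopDim_add_card src tgt (· ∉ C)
  have hloopC := loopDim_add_card src tgt (· ∈ C)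
  have hcutI := cutDim_add_one src tgt (· ∉ C)
  have hcutC := cutDim_add_one src tgt (· ∈ C)
  rw [show (fun e => ¬ e ∉ C) = (· ∈ C) from funext fun _ => propext not_not] at hcutI
  have hcard := Finset.card_filter_add_card_filter_not (s := Finset.univ) (· ∈ C)
  rw [Fintype.card_subtype] at hloopI hloopC
  rw [Finset.card_univ] at hcard
  omega

/-- For a connected planar circuit, with `Δ_C, Δ_I` the
dimensions of the homogeneous (capacitive/inductive) cycle spaces and
`Γ_C, Γ_I` those of the homogeneous cut spaces (mod all-ones),
`|F| - 1 - Δ_I - Δ_C = |V| - 1 - Γ_I - Γ_C`, stated additively. -/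
theorem stmt11 {E V F : Type*} [Fintype E] [Fintype V] [Fintype F]
    [DecidableEq E] [DecidableEq V]
    (src tgt : E → V)
    (hconn : ∀ u v : V, Relation.ReflTransGen
      (fun a b => ∃ e : E, (src e = a ∧ tgt e = b) ∨ (src e = b ∧ tgt e = a)) u v)
    (A : Matrix E V ℝ)
    (hA : ∀ e v, A e v = (if tgt e = v then 1 else 0) - (if src e = v then 1 else 0))
    (B : Matrix F E ℝ)
    (hexact : ∀ x : E → ℝ, B.mulVec x = 0 ↔ ∃ y : V → ℝ, x = A.mulVec y)
    (hrankA : A.rank = Fintype.card V - 1)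
    (hrankB : B.rank = Fintype.card F - 1)
    (hEuler : (Fintype.card V : ℤ) - Fintype.card E + Fintype.card F = 2)
    (C : Finset E) :
    Fintype.card F + cutDim src tgt (· ∉ C) + cutDim src tgt (· ∈ C)
      = Fintype.card V + loopDim src tgt (· ∉ C) + loopDim src tgt (· ∈ C) :=
  stmt11_general src tgt B hrankB hEuler C
end
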